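/- arXiv:1805.10677 — 4 statements merged into one kernel-verified Lean document; each statement's English description precedes it below -/
import Mathlib

section
/- Let X be a nonnegative random variable with Laplace transform L_X(s) = E[exp(-sX)], and let λ > 0 satisfy R₀ := λ·E[X] > 1. Then the equation 1 - p = L_X(λp) has a unique solution p in the open interval (0,1). -/
/-!
Write `L s = E[exp (-s X)] = mgf X μ (-s)`. Since `X` is not a.s. zero, `L` is strictly convex, so
the secant slope `φ s = (1 - L s) / s` from `0` is strictly decreasing on `(0, ∞)`. By dominated
convergence `φ s → E[X]` as `s → 0⁺`, while `φ (1 / c) = c (1 - L (1 / c)) < c`. Hence for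
`0 < c < E[X]` the equation `φ s = c`, i.e. `L s = 1 - c s`, has exactly one positive root; the
theorem is the case `c = 1 / λ`, `s = λ p`.
-/

open MeasureTheory Set Filter Topology ProbabilityTheory Real

namespace ProbabilityTheory

variable {Ω : Type*} [MeasurableSpace Ω] {μ : Measure Ω} {X : Ω → ℝ}

lemma Iic_zero_subset_integrableExpSet [IsFiniteMeasure μ] (hXm : AEStronglyMeasurable X μ)
    (hX : 0 ≤ᵐ[μ] X) : Iic 0 ⊆ integrableExpSet X μ := by
  intro t (ht : t ≤ 0)
  refine (integrable_const (1 : ℝ)).mono'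
    (continuous_exp.comp_aestronglyMeasurable (hXm.const_mul t)) ?_
  filter_upwards [hX] with ω hω
  rw [norm_of_nonneg (exp_pos _).le, exp_le_one_iff]
  exact mul_nonpos_of_nonpos_of_nonneg ht hω

lemma strictConvexOn_mgf (hX : μ {ω | X ω ≠ 0} ≠ 0) :
    StrictConvexOn ℝ (integrableExpSet X μ) (mgf X μ) := by
  refine ⟨convex_integrableExpSet, fun t ht u hu htu a b ha hb hab => ?_⟩
  have hit := integrable_of_mem_integrableExpSet ht
  have hiu := integrable_of_mem_integrableExpSet hu
  have himid : Integrable (fun ω => exp ((a * t + b * u) * X ω)) μ :=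
    integrable_of_mem_integrableExpSet (convex_integrableExpSet ht hu ha.le hb.le hab)
  have hle : ∀ ω, exp ((a * t + b * u) * X ω) ≤ a * exp (t * X ω) + b * exp (u * X ω) := by
    intro ω
    rw [add_mul, mul_assoc, mul_assoc]
    simpa only [smul_eq_mul] using
      convexOn_exp.2 (mem_univ (t * X ω)) (mem_univ (u * X ω)) ha.le hb.le hab
  have hlt : ∀ ω, X ω ≠ 0 →
      exp ((a * t + b * u) * X ω) < a * exp (t * X ω) + b * exp (u * X ω) := by
    intro ω hω
    rw [add_mul, mul_assoc, mul_assoc]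
    simpa only [smul_eq_mul] using strictConvexOn_exp.2 (mem_univ (t * X ω))
      (mem_univ (u * X ω)) (fun h => htu (mul_right_cancel₀ hω h)) ha hb hab
  have hint : Integrable (fun ω => a * exp (t * X ω) + b * exp (u * X ω)) μ :=
    (hit.const_mul a).add (hiu.const_mul b)
  have hgap :
      0 < ∫ ω, a * exp (t * X ω) + b * exp (u * X ω) - exp ((a * t + b * u) * X ω) ∂μ := by
    rw [integral_pos_iff_support_of_nonneg_ae (ae_of_all _ fun ω => sub_nonneg.2 (hle ω))
      (hint.sub himid)]
    refine (pos_iff_ne_zero.2 hX).trans_le (measure_mono fun ω hω => ?_)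
    exact (sub_pos.2 (hlt ω hω)).ne'
  rwa [integral_sub hint himid, integral_add (hit.const_mul a) (hiu.const_mul b),
    integral_const_mul, integral_const_mul, sub_pos] at hgap

lemma strictAntiOn_one_sub_mgf_neg_div [IsProbabilityMeasure μ] (hXm : AEStronglyMeasurable X μ)
    (hX : 0 ≤ᵐ[μ] X) (hX₀ : μ {ω | X ω ≠ 0} ≠ 0) :
    StrictAntiOn (fun s => (1 - mgf X μ (-s)) / s) (Ioi 0) := by
  intro s (hs : 0 < s) r (hr : 0 < r) hsr
  have hconv := (strictConvexOn_mgf hX₀).subset (Iic_zero_subset_integrableExpSet hXm hX)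
    (convex_Iic 0)
  have := hconv.secant_strict_mono (a := 0) self_mem_Iic (neg_nonpos.2 hr.le)
    (neg_nonpos.2 hs.le) (neg_ne_zero.2 hr.ne') (neg_ne_zero.2 hs.ne') (neg_lt_neg hsr)
  simpa only [mgf_zero, sub_zero, div_neg, neg_div', neg_sub] using this

lemma continuousOn_one_sub_mgf_neg_div [IsFiniteMeasure μ] (hXm : AEStronglyMeasurable X μ)
    (hX : 0 ≤ᵐ[μ] X) : ContinuousOn (fun s => (1 - mgf X μ (-s)) / s) (Ioi 0) := by
  have hL : ContinuousOn (mgf X μ) (Iio 0) :=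
    continuousOn_mgf.mono (interior_Iic (a := (0 : ℝ)) ▸
      interior_mono (Iic_zero_subset_integrableExpSet hXm hX))
  refine (continuousOn_const.sub (hL.comp continuousOn_neg fun s hs => ?_)).div
    continuousOn_id fun s hs => ?_
  · exact neg_lt_zero.2 (mem_Ioi.1 hs)
  · exact (mem_Ioi.1 hs).ne'

lemma tendsto_one_sub_exp_neg_mul_div (x : ℝ) :
    Tendsto (fun s => (1 - exp (-s * x)) / s) (𝓝[≠] 0) (𝓝 x) := by
  have hderiv : HasDerivAt (fun s => -exp (-s * x)) x 0 := by
    simpa using ((hasDerivAt_neg (0 : ℝ)).mul_const x).exp.fun_neg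
  refine hderiv.tendsto_slope_zero.congr fun s => ?_
  simp only [zero_add, neg_zero, zero_mul, exp_zero, smul_eq_mul]
  ring

lemma abs_one_sub_exp_neg_mul_div_le {s x : ℝ} (hs : 0 < s) (hx : 0 ≤ x) :
    |(1 - exp (-s * x)) / s| ≤ x := by
  have hupper : exp (-s * x) ≤ 1 := exp_le_one_iff.2 (by nlinarith)
  have hlower : 1 - s * x ≤ exp (-s * x) := by linarith [add_one_le_exp (-s * x)]
  rw [abs_of_nonneg (div_nonneg (sub_nonneg.2 hupper) hs.le), div_le_iff₀ hs]
  linarith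

lemma tendsto_one_sub_mgf_neg_div [IsProbabilityMeasure μ] (hXi : Integrable X μ)
    (hX : 0 ≤ᵐ[μ] X) : Tendsto (fun s => (1 - mgf X μ (-s)) / s) (𝓝[>] 0) (𝓝 μ[X]) := by
  have hF : ∀ s ∈ Ioi (0 : ℝ),
      (1 - mgf X μ (-s)) / s = ∫ ω, (1 - exp (-s * X ω)) / s ∂μ := by
    intro s (hs : 0 < s)
    rw [integral_div, integral_sub (integrable_const 1), integral_const]
    · simp [mgf]
    · exact Iic_zero_subset_integrableExpSet hXi.1 hX (neg_nonpos.2 hs.le)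
  refine Tendsto.congr' (eventuallyEq_nhdsWithin_of_eqOn fun s hs => (hF s hs).symm) ?_
  refine tendsto_integral_filter_of_dominated_convergence X (Eventually.of_forall fun s => ?_)
    ?_ hXi ?_
  · exact ((continuous_const.sub continuous_exp).div_const s).comp_aestronglyMeasurable
      (hXi.1.const_mul (-s))
  · filter_upwards [self_mem_nhdsWithin] with s (hs : 0 < s)
    filter_upwards [hX] with ω hω
    exact (norm_eq_abs _).trans_le (abs_one_sub_exp_neg_mul_div_le hs hω)
  · exact ae_of_all _ fun ω => (tendsto_one_sub_exp_neg_mul_div (X ω)).mono_left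
      (nhdsGT_le_nhdsNE 0)

theorem existsUnique_pos_mgf_neg_eq_one_sub_mul [IsProbabilityMeasure μ] (hXi : Integrable X μ)
    (hX : 0 ≤ᵐ[μ] X) {c : ℝ} (hc : 0 < c) (hcX : c < μ[X]) :
    ∃! s, 0 < s ∧ mgf X μ (-s) = 1 - c * s := by
  set φ := fun s => (1 - mgf X μ (-s)) / s with hφ
  have hX₀ : μ {ω | X ω ≠ 0} ≠ 0 :=
    ((integral_pos_iff_support_of_nonneg_ae hX hXi).1 (hc.trans hcX)).ne'
  have hroot : ∀ s, 0 < s → (mgf X μ (-s) = 1 - c * s ↔ φ s = c) := by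
    intro s hs
    rw [hφ, div_eq_iff hs.ne']
    constructor <;> intro h <;> linarith
  obtain ⟨s₀, hφs₀, hs₀⟩ := (((tendsto_one_sub_mgf_neg_div hXi hX).eventually
    (eventually_gt_nhds hcX)).and self_mem_nhdsWithin).exists
  have hφc : φ c⁻¹ < c := by
    have : 0 < mgf X μ (-c⁻¹) :=
      mgf_pos (Iic_zero_subset_integrableExpSet hXi.1 hX (neg_nonpos.2 (inv_pos.2 hc).le))
    show (1 - mgf X μ (-c⁻¹)) / c⁻¹ < c
    rw [div_inv_eq_mul]
    nlinarith
  have hpos : uIcc s₀ c⁻¹ ⊆ Ioi 0 := fun s hs =>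
    (lt_inf_iff.2 ⟨mem_Ioi.1 hs₀, inv_pos.2 hc⟩).trans_le hs.1
  obtain ⟨s, hs, hφs⟩ := intermediate_value_uIcc
    ((continuousOn_one_sub_mgf_neg_div hXi.1 hX).mono hpos)
    (mem_uIcc.2 (Or.inr ⟨hφc.le, hφs₀.le⟩))
  refine ⟨s, ⟨hpos hs, (hroot s (hpos hs)).2 hφs⟩, fun r ⟨hr, hr_root⟩ => ?_⟩
  exact (strictAntiOn_one_sub_mgf_neg_div hXi.1 hX hX₀).injOn hr (hpos hs)
    (((hroot r hr).1 hr_root).trans hφs.symm)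

end ProbabilityTheory

theorem outbreak_prob_unique_general
    {Ω : Type*} [MeasurableSpace Ω] (μ : Measure Ω) [IsProbabilityMeasure μ]
    (X : Ω → ℝ) (hXpos : ∀ ω, 0 ≤ X ω)
    (hXint : Integrable X μ)
    (lam : ℝ) (hlam : 0 < lam) (hR0 : 1 < lam * ∫ ω, X ω ∂μ) :
    ∃! p : ℝ, p ∈ Ioo (0:ℝ) 1 ∧ 1 - p = ∫ ω, Real.exp (-(lam * p) * X ω) ∂μ := by
  have hc : lam⁻¹ < μ[X] := by rwa [inv_lt_iff_one_lt_mul₀' hlam]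
  obtain ⟨s, ⟨hs, hs_root⟩, huniq⟩ :=
    existsUnique_pos_mgf_neg_eq_one_sub_mul hXint (ae_of_all _ hXpos) (inv_pos.2 hlam) hc
  have hroot (p : ℝ) :
      1 - p = mgf X μ (-(lam * p)) ↔ mgf X μ (-(lam * p)) = 1 - lam⁻¹ * (lam * p) := by
    rw [inv_mul_cancel_left₀ hlam.ne', eq_comm]
  have hs_div_lt : s / lam < 1 := by
    have : 0 < mgf X μ (-s) := mgf_pos
      (Iic_zero_subset_integrableExpSet hXint.1 (ae_of_all _ hXpos) (neg_nonpos.2 hs.le))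
    rw [← inv_mul_eq_div]
    linarith
  refine ⟨s / lam, ⟨⟨div_pos hs hlam, hs_div_lt⟩, ?_⟩, fun p ⟨hp, hp_root⟩ => ?_⟩
  · exact (hroot _).2 (by rwa [mul_div_cancel₀ s hlam.ne'])
  · exact eq_div_of_mul_eq hlam.ne' ((mul_comm _ _).trans
      (huniq (lam * p) ⟨mul_pos hlam hp.1, (hroot p).1 hp_root⟩))

theorem outbreak_prob_unique
    {Ω : Type*} [MeasurableSpace Ω] (μ : Measure Ω) [IsProbabilityMeasure μ]
    (X : Ω → ℝ) (hXmeas : Measurable X) (hXpos : ∀ ω, 0 ≤ X ω)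
    (hXint : Integrable X μ)
    (lam : ℝ) (hlam : 0 < lam) (hR0 : 1 < lam * ∫ ω, X ω ∂μ) :
    ∃! p : ℝ, p ∈ Ioo (0:ℝ) 1 ∧ 1 - p = ∫ ω, Real.exp (-(lam * p) * X ω) ∂μ :=
  outbreak_prob_unique_general μ X hXpos hXint lam hlam hR0
end

section
/- If R₀ > 1, then the final size equation -ln(1-π) = R₀·π has a unique solution π in the open interval (0,1). -/
open Set

theorem final_size_unique (R0 : ℝ) (hR0 : 1 < R0) :
    ∃! π : ℝ, π ∈ Ioo (0:ℝ) 1 ∧ -Real.log (1 - π) = R0 * π := by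
  have hR0' : 0 < R0 := lt_trans one_pos hR0
  -- uniqueness: no two solutions x < y
  have key : ∀ x y : ℝ, x ∈ Ioo (0:ℝ) 1 → y ∈ Ioo (0:ℝ) 1 →
      -Real.log (1 - x) = R0 * x → -Real.log (1 - y) = R0 * y → x < y → False := by
    intro x y hx hy ex ey hxy
    obtain ⟨hx0, hx1⟩ := hx
    obtain ⟨hy0, hy1⟩ := hy
    set t := x / y with ht
    have ht0 : 0 < t := div_pos hx0 hy0
    have ht1 : t < 1 := (div_lt_one hy0).2 hxy
    have h1y : (1 - y) ∈ Ioi (0:ℝ) := by simp only [mem_Ioi]; linarith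
    have h1 : (1:ℝ) ∈ Ioi (0:ℝ) := by norm_num
    have hne : (1:ℝ) ≠ 1 - y := by intro h; linarith
    have hcc := strictConcaveOn_log_Ioi.2 h1 h1y hne
      (by linarith : (0:ℝ) < 1 - t) ht0 (by ring)
    have hty : t * y = x := div_mul_cancel₀ x hy0.ne'
    simp only [smul_eq_mul, Real.log_one, mul_zero, mul_one, zero_add] at hcc
    have harg : 1 - t + t * (1 - y) = 1 - x := by nlinarith [hty]
    rw [harg] at hcc
    -- hcc : t * log (1-y) < log (1 - x)
    nlinarith [hcc, hty]
  -- pick points for IVT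
  set a : ℝ := (1 - 1/R0)/2 with ha
  set b : ℝ := 1 - Real.exp (-R0)/2 with hb
  have hinv : 1/R0 < 1 := by rw [div_lt_one hR0']; exact hR0
  have ha0 : 0 < a := by simp only [ha]; linarith
  have ha2 : a < 1 - 1/R0 := by simp only [ha]; linarith
  have hexp : Real.exp (-R0) < 1 := Real.exp_lt_one_iff.2 (by linarith)
  have hexp0 : 0 < Real.exp (-R0) := Real.exp_pos _
  have hab : a < b := by
    have : 0 < 1/R0 := by positivity
    simp only [ha, hb]; linarith
  have hb1 : b < 1 := by simp only [hb]; linarith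
  have h1a : 0 < 1 - a := by linarith [lt_trans hab hb1]
  -- g a < 0
  have hga : -Real.log (1 - a) - R0 * a < 0 := by
    have hlog := Real.one_sub_inv_le_log_of_pos h1a
    have hmul : (1 - a) * (1 - a)⁻¹ = 1 := mul_inv_cancel₀ h1a.ne'
    have hR : (1-a)⁻¹ < R0 := by
      rw [inv_lt_iff_one_lt_mul₀ h1a, ha]
      nlinarith [mul_one_div_cancel hR0'.ne']
    have h2 : a * (1-a)⁻¹ < a * R0 := mul_lt_mul_of_pos_left hR ha0
    nlinarith [hlog, hmul, h2]
  -- g b > 0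
  have hgb : 0 < -Real.log (1 - b) - R0 * b := by
    have h1b : 1 - b = Real.exp (-R0)/2 := by simp only [hb]; ring
    have : Real.log (1 - b) = -R0 - Real.log 2 := by
      rw [h1b, Real.log_div hexp0.ne' (by norm_num), Real.log_exp]
    rw [this]
    have hlog2 : 0 < Real.log 2 := Real.log_pos (by norm_num)
    nlinarith
  -- continuity on [a,b]
  have hcont : ContinuousOn (fun x => -Real.log (1 - x) - R0 * x) (Icc a b) := by
    apply ContinuousOn.sub _ (by fun_prop)
    apply ContinuousOn.neg
    apply ContinuousOn.comp Real.continuousOn_log (by fun_prop)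
    intro x hx
    simp only [mem_compl_iff, mem_singleton_iff]
    have := hx.2
    intro h
    have : (1:ℝ) - x ≤ 1 - b := by linarith [hx.2]
    nlinarith
  obtain ⟨c, hc, hgc⟩ := intermediate_value_Ioo hab.le hcont (⟨hga, hgb⟩ :
    (0:ℝ) ∈ Ioo (-Real.log (1 - a) - R0 * a) (-Real.log (1 - b) - R0 * b))
  have hcIoo : c ∈ Ioo (0:ℝ) 1 := ⟨lt_trans ha0 hc.1, lt_trans hc.2 hb1⟩
  have hceq : -Real.log (1 - c) = R0 * c := by
    have : -Real.log (1 - c) - R0 * c = 0 := hgc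
    linarith
  refine ⟨c, ⟨hcIoo, hceq⟩, ?_⟩
  rintro y ⟨hy, hyeq⟩
  rcases lt_trichotomy y c with h | h | h
  · exact absurd (key y c hy hcIoo hyeq hceq h) (fun f => f.elim)
  · exact h
  · exact absurd (key c y hcIoo hy hceq hyeq h) (fun f => f.elim)
end

section
/- Let X, Y be nonnegative random variables with λ·E[X] > 1 for a constant λ > 0. Suppose α > 0 satisfies α = λ·E[e^{-αY} - e^{-α(X+Y)}] and α̃ > 0 satisfies α̃ = λ·E[1 - e^{-α̃X}]. Then α ≤ α̃. Consequently, if p ∈ (0,1) solves 1 - p = E[e^{-λpX}] (so that p·λ = α̃), then p·λ/α ≥ 1. -/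
open MeasureTheory Set
open Real

/-!
Since `e^{-αy} - e^{-α(x+y)} ≤ 1 - e^{-αx}`, the latent period only lowers the right-hand side
of the equation for `α`, so `α ≤ λ E[1 - e^{-αX}]`. The map `s ↦ E[1 - e^{-sX}] / s` is strictly
decreasing on `(0, ∞)` (pointwise, `(1 - e^{-u}) / u` is a secant slope of the convex function
`exp` through `0`), and `α̃` is the point where it equals `1 / λ`; hence `α ≤ α̃`. Finally `λp` is
itself a positive root of the equation for `α̃`.
-/

lemma one_sub_exp_neg_div_lt_one_sub_exp_neg_div {u v : ℝ} (hu : 0 < u) (huv : u < v) :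
    (1 - exp (-v)) / v < (1 - exp (-u)) / u := by
  have h := strictConvexOn_exp.secant_strict_mono (a := 0) trivial trivial trivial
    (by linarith : -v ≠ 0) (by linarith : -u ≠ 0) (neg_lt_neg huv)
  rwa [exp_zero, sub_zero, sub_zero, div_neg, div_neg, ← neg_div, ← neg_div, neg_sub,
    neg_sub] at h

lemma strictAntiOn_one_sub_exp_neg_mul_div {x : ℝ} (hx : 0 < x) :
    StrictAntiOn (fun s => (1 - exp (-s * x)) / s) (Ioi 0) := by
  intro s hs t _ hst
  have h := one_sub_exp_neg_div_lt_one_sub_exp_neg_div (mul_pos hs hx)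
    (mul_lt_mul_of_pos_right hst hx)
  simp only [neg_mul, div_mul_eq_div_div] at h ⊢
  exact (div_lt_div_iff_of_pos_right hx).1 h

lemma antitoneOn_one_sub_exp_neg_mul_div {x : ℝ} (hx : 0 ≤ x) :
    AntitoneOn (fun s => (1 - exp (-s * x)) / s) (Ioi 0) := by
  rcases hx.eq_or_lt with rfl | hx
  · intro s _ t _ _
    simp
  · exact (strictAntiOn_one_sub_exp_neg_mul_div hx).antitoneOn

lemma one_sub_exp_neg_mul_nonneg {a x : ℝ} (ha : 0 ≤ a) (hx : 0 ≤ x) :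
    0 ≤ 1 - exp (-a * x) :=
  sub_nonneg.2 (exp_le_one_iff.2 (by nlinarith))

lemma exp_neg_mul_sub_exp_neg_mul_add_le {a x y : ℝ} (ha : 0 ≤ a) (hx : 0 ≤ x) (hy : 0 ≤ y) :
    exp (-a * y) - exp (-a * (x + y)) ≤ 1 - exp (-a * x) := by
  have hfactor : (1 - exp (-a * x)) - (exp (-a * y) - exp (-a * (x + y)))
      = (1 - exp (-a * x)) * (1 - exp (-a * y)) := by
    rw [show -a * (x + y) = -a * x + -a * y by ring, exp_add]
    ring
  have := mul_nonneg (one_sub_exp_neg_mul_nonneg ha hx) (one_sub_exp_neg_mul_nonneg ha hy)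
  linarith

section Integral

variable {Ω : Type*} [MeasurableSpace Ω] {μ : Measure Ω} [IsFiniteMeasure μ] {X : Ω → ℝ}

lemma integrable_exp_neg_mul (hX : Measurable X) (hX0 : ∀ ω, 0 ≤ X ω) {a : ℝ} (ha : 0 ≤ a) :
    Integrable (fun ω => exp (-a * X ω)) μ := by
  refine Integrable.of_bound (by fun_prop) 1 (ae_of_all _ fun ω => ?_)
  rw [norm_of_nonneg (exp_nonneg _)]
  linarith [one_sub_exp_neg_mul_nonneg ha (hX0 ω)]

lemma integrable_one_sub_exp_neg_mul (hX : Measurable X) (hX0 : ∀ ω, 0 ≤ X ω) {a : ℝ}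
    (ha : 0 ≤ a) : Integrable (fun ω => 1 - exp (-a * X ω)) μ :=
  (integrable_const 1).sub (integrable_exp_neg_mul hX hX0 ha)

lemma strictAntiOn_integral_one_sub_exp_neg_mul_div (hX : Measurable X) (hX0 : ∀ ω, 0 ≤ X ω)
    (hX_ne : ¬ X =ᵐ[μ] 0) :
    StrictAntiOn (fun s => (∫ ω, (1 - exp (-s * X ω)) ∂μ) / s) (Ioi 0) := by
  intro s hs t ht hst
  have hs_int := (integrable_one_sub_exp_neg_mul (μ := μ) hX hX0 (le_of_lt hs)).div_const s
  have ht_int := (integrable_one_sub_exp_neg_mul (μ := μ) hX hX0 (le_of_lt ht)).div_const t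
  simp only [← integral_div]
  rw [← sub_pos, ← integral_sub hs_int ht_int, integral_pos_iff_support_of_nonneg
    (fun ω => sub_nonneg.2 (antitoneOn_one_sub_exp_neg_mul_div (hX0 ω) hs ht hst.le))
    (hs_int.sub ht_int)]
  refine pos_iff_ne_zero.2 fun h => hX_ne (ae_iff.2 (measure_mono_null (fun ω hω => ?_) h))
  exact (sub_pos.2 (strictAntiOn_one_sub_exp_neg_mul_div ((hX0 ω).lt_of_ne' hω) hs ht hst)).ne'

lemma integral_exp_neg_mul_sub_exp_neg_mul_add_le (hX : Measurable X) (hX0 : ∀ ω, 0 ≤ X ω)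
    {Y : Ω → ℝ} (hY0 : ∀ ω, 0 ≤ Y ω) {a : ℝ} (ha : 0 ≤ a) :
    ∫ ω, (exp (-a * Y ω) - exp (-a * (X ω + Y ω))) ∂μ ≤ ∫ ω, (1 - exp (-a * X ω)) ∂μ := by
  refine integral_mono_of_nonneg (ae_of_all _ fun ω => ?_) (integrable_one_sub_exp_neg_mul hX hX0 ha)
    (ae_of_all _ fun ω => exp_neg_mul_sub_exp_neg_mul_add_le ha (hX0 ω) (hY0 ω))
  exact sub_nonneg.2 (exp_le_exp.2 (by nlinarith [hX0 ω]))

theorem le_of_le_mul_integral_one_sub_exp_neg_mul (hX : Measurable X) (hX0 : ∀ ω, 0 ≤ X ω)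
    (hX_ne : ¬ X =ᵐ[μ] 0) {lam α αt : ℝ} (hlam : 0 < lam) (hα : 0 < α) (hαt : 0 < αt)
    (hαle : α ≤ lam * ∫ ω, (1 - exp (-α * X ω)) ∂μ)
    (hαteq : αt = lam * ∫ ω, (1 - exp (-αt * X ω)) ∂μ) : α ≤ αt := by
  refine ((strictAntiOn_integral_one_sub_exp_neg_mul_div hX hX0 hX_ne).le_iff_ge hαt hα).1 ?_
  rw [div_le_div_iff₀ hαt hα]
  refine le_of_mul_le_mul_left ?_ hlam
  linear_combination αt * hαle - α * hαteq

end Integral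

theorem malthus_le_no_latent_general
    {Ω : Type*} [MeasurableSpace Ω] (μ : Measure Ω) [IsProbabilityMeasure μ]
    (X Y : Ω → ℝ) (hX : Measurable X)
    (hXpos : ∀ ω, 0 ≤ X ω) (hYpos : ∀ ω, 0 ≤ Y ω)
    (lam : ℝ) (hlam : 0 < lam) (hR0 : 1 < lam * ∫ ω, X ω ∂μ)
    (α αt : ℝ) (hα : 0 < α) (hαt : 0 < αt)
    (hαeq : α = lam * ∫ ω, (Real.exp (-α * Y ω) - Real.exp (-α * (X ω + Y ω))) ∂μ)
    (hαteq : αt = lam * ∫ ω, (1 - Real.exp (-αt * X ω)) ∂μ) :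
    α ≤ αt ∧
      ∀ p : ℝ, p ∈ Ioo (0:ℝ) 1 →
        1 - p = ∫ ω, Real.exp (-(lam * p) * X ω) ∂μ → 1 ≤ p * lam / α := by
  have hX_ne : ¬ X =ᵐ[μ] 0 := fun h => by
    rw [integral_congr_ae h] at hR0
    simp at hR0
    linarith
  have hαle : α ≤ lam * ∫ ω, (1 - exp (-α * X ω)) ∂μ := hαeq.trans_le <|
    mul_le_mul_of_nonneg_left (integral_exp_neg_mul_sub_exp_neg_mul_add_le hX hXpos hYpos hα.le)
      hlam.le
  refine ⟨le_of_le_mul_integral_one_sub_exp_neg_mul hX hXpos hX_ne hlam hα hαt hαle hαteq,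
    fun p hp hp_eq => ?_⟩
  have hlamp : 0 < lam * p := mul_pos hlam hp.1
  have hroot : lam * p = lam * ∫ ω, (1 - exp (-(lam * p) * X ω)) ∂μ := by
    rw [integral_sub (integrable_const 1) (integrable_exp_neg_mul hX hXpos hlamp.le), ← hp_eq]
    simp
  have := le_of_le_mul_integral_one_sub_exp_neg_mul hX hXpos hX_ne hlam hα hlamp hαle hroot
  rw [le_div_iff₀ hα]
  linarith

theorem malthus_le_no_latent
    {Ω : Type*} [MeasurableSpace Ω] (μ : Measure Ω) [IsProbabilityMeasure μ]
    (X Y : Ω → ℝ) (hX : Measurable X) (hY : Measurable Y)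
    (hXpos : ∀ ω, 0 ≤ X ω) (hYpos : ∀ ω, 0 ≤ Y ω)
    (hXint : Integrable X μ)
    (lam : ℝ) (hlam : 0 < lam) (hR0 : 1 < lam * ∫ ω, X ω ∂μ)
    (α αt : ℝ) (hα : 0 < α) (hαt : 0 < αt)
    (hαeq : α = lam * ∫ ω, (Real.exp (-α * Y ω) - Real.exp (-α * (X ω + Y ω))) ∂μ)
    (hαteq : αt = lam * ∫ ω, (1 - Real.exp (-αt * X ω)) ∂μ) :
    α ≤ αt ∧
      ∀ p : ℝ, p ∈ Ioo (0:ℝ) 1 →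
        1 - p = ∫ ω, Real.exp (-(lam * p) * X ω) ∂μ → 1 ≤ p * lam / α :=
  malthus_le_no_latent_general μ X Y hX hXpos hYpos lam hlam hR0 α αt hα hαt hαeq hαteq
end

section
/- Let X, Y be nonnegative random variables with 0 < E[X] < ∞ and g(t) = P(Y < t < X+Y)/E[X]. Then for every s > 0, the Laplace transform of g satisfies L_g(s) = (L_Y(s) - L_{X+Y}(s))/(s·E[X]), where L_Y(s) = E[e^{-sY}] and L_{X+Y}(s) = E[e^{-s(X+Y)}]. -/
/-!
Both sides are `∫∫ e^{-st}` over the region `{(ω, t) | Y ω < t < X ω + Y ω}` (divided by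
`s E[X]` on the right). Integrating first in `ω` produces `e^{-st} P(Y < t < X + Y)`,
integrating first in `t` produces `(e^{-sY} - e^{-s(X+Y)}) / s`; Fubini identifies the two.
-/

open MeasureTheory Set

theorem integral_mul_measureReal_sections {Ω α : Type*} [MeasurableSpace Ω] [MeasurableSpace α]
    {μ : Measure Ω} [IsFiniteMeasure μ] {ν : Measure α} [SFinite ν] {S : Set (Ω × α)}
    (hS : MeasurableSet S) {f : α → ℝ} (hf : Integrable f ν) :
    ∫ t, f t * μ.real {ω | (ω, t) ∈ S} ∂ν = ∫ ω, ∫ t in {t | (ω, t) ∈ S}, f t ∂ν ∂μ := by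
  have hF : Integrable (S.indicator fun p => f p.2) (μ.prod ν) := (hf.comp_snd μ).indicator hS
  calc ∫ t, f t * μ.real {ω | (ω, t) ∈ S} ∂ν
      = ∫ t, ∫ ω, S.indicator (fun p => f p.2) (ω, t) ∂μ ∂ν := by
        refine integral_congr_ae (ae_of_all _ fun t => (mul_comm _ _).trans ?_)
        exact (integral_indicator_const (f t) (measurable_prodMk_right hS)).symm
    _ = ∫ ω, ∫ t, S.indicator (fun p => f p.2) (ω, t) ∂ν ∂μ :=
        (integral_integral_swap (f := fun ω t => S.indicator (fun p => f p.2) (ω, t)) hF).symm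
    _ = ∫ ω, ∫ t in {t | (ω, t) ∈ S}, f t ∂ν ∂μ :=
        integral_congr_ae (ae_of_all _ fun ω => integral_indicator (measurable_prodMk_left hS))

theorem integral_exp_neg_mul_Ioo {s : ℝ} (hs : s ≠ 0) {a b : ℝ} (hab : a ≤ b) :
    ∫ t in Ioo a b, Real.exp (-s * t) = (Real.exp (-s * a) - Real.exp (-s * b)) / s := by
  rw [← integral_Ioc_eq_integral_Ioo, ← intervalIntegral.integral_of_le hab,
    intervalIntegral.integral_comp_mul_left (fun u => Real.exp u) (neg_ne_zero.mpr hs),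
    integral_exp, smul_eq_mul]
  field_simp
  ring

theorem integrable_exp_neg_mul_of_nonneg {Ω : Type*} [MeasurableSpace Ω] {μ : Measure Ω}
    [IsFiniteMeasure μ] {Z : Ω → ℝ} (hZ : Measurable Z) (hZ0 : ∀ ω, 0 ≤ Z ω) {s : ℝ}
    (hs : 0 ≤ s) : Integrable (fun ω => Real.exp (-s * Z ω)) μ := by
  refine .of_bound (by fun_prop) 1 (ae_of_all _ fun ω => ?_)
  rw [Real.norm_eq_abs, abs_of_pos (Real.exp_pos _), Real.exp_le_one_iff]
  nlinarith [hZ0 ω]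

theorem generation_time_laplace_general
    {Ω : Type*} [MeasurableSpace Ω] (μ : Measure Ω) [IsProbabilityMeasure μ]
    (X Y : Ω → ℝ) (hX : Measurable X) (hY : Measurable Y)
    (hXpos : ∀ ω, 0 ≤ X ω) (hYpos : ∀ ω, 0 ≤ Y ω)
    (g : ℝ → ℝ)
    (hg : ∀ t, g t = (μ {ω | Y ω < t ∧ t < X ω + Y ω}).toReal / ∫ ω, X ω ∂μ) :
    ∀ s : ℝ, 0 < s →
      ∫ t in Ioi (0:ℝ), Real.exp (-s * t) * g t =
        ((∫ ω, Real.exp (-s * Y ω) ∂μ) - ∫ ω, Real.exp (-s * (X ω + Y ω)) ∂μ) /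
          (s * ∫ ω, X ω ∂μ) := by
  intro s hs
  have hS : MeasurableSet {p : Ω × ℝ | Y p.1 < p.2 ∧ p.2 < X p.1 + Y p.1} :=
    (measurableSet_lt (by fun_prop) measurable_snd).inter
      (measurableSet_lt measurable_snd (by fun_prop))
  have hinner : ∀ ω,
      ∫ t in Ioo (Y ω) (X ω + Y ω), Real.exp (-s * t) ∂volume.restrict (Ioi 0) =
        (Real.exp (-s * Y ω) - Real.exp (-s * (X ω + Y ω))) / s := fun ω => by
    rw [Measure.restrict_restrict measurableSet_Ioo,
      inter_eq_left.mpr (Ioo_subset_Ioi_self.trans (Ioi_subset_Ioi (hYpos ω))),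
      integral_exp_neg_mul_Ioo hs.ne' (by linarith [hXpos ω])]
  have hfubini :=
    integral_mul_measureReal_sections (μ := μ) hS (exp_neg_integrableOn_Ioi 0 hs)
  simp only [mem_ofPred_eq] at hfubini
  calc ∫ t in Ioi 0, Real.exp (-s * t) * g t
      = (∫ t in Ioi 0, Real.exp (-s * t) * μ.real {ω | Y ω < t ∧ t < X ω + Y ω}) /
          ∫ ω, X ω ∂μ := by
        simp_rw [hg, ← mul_div_assoc]
        exact integral_div _ _
    _ = (∫ ω, (Real.exp (-s * Y ω) - Real.exp (-s * (X ω + Y ω))) / s ∂μ) /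
          ∫ ω, X ω ∂μ := by
        rw [hfubini]
        exact congrArg (· / _) (integral_congr_ae (ae_of_all _ hinner))
    _ = _ := by
        rw [integral_div, integral_sub (integrable_exp_neg_mul_of_nonneg hY hYpos hs.le)
          (integrable_exp_neg_mul_of_nonneg (Z := fun ω => X ω + Y ω) (by fun_prop)
            (fun ω => add_nonneg (hXpos ω) (hYpos ω)) hs.le), div_div]

theorem generation_time_laplace
    {Ω : Type*} [MeasurableSpace Ω] (μ : Measure Ω) [IsProbabilityMeasure μ]
    (X Y : Ω → ℝ) (hX : Measurable X) (hY : Measurable Y)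
    (hXpos : ∀ ω, 0 ≤ X ω) (hYpos : ∀ ω, 0 ≤ Y ω)
    (hXint : Integrable X μ) (hEX : 0 < ∫ ω, X ω ∂μ)
    (g : ℝ → ℝ)
    (hg : ∀ t, g t = (μ {ω | Y ω < t ∧ t < X ω + Y ω}).toReal / ∫ ω, X ω ∂μ) :
    ∀ s : ℝ, 0 < s →
      ∫ t in Ioi (0:ℝ), Real.exp (-s * t) * g t =
        ((∫ ω, Real.exp (-s * Y ω) ∂μ) - ∫ ω, Real.exp (-s * (X ω + Y ω)) ∂μ) /
          (s * ∫ ω, X ω ∂μ) :=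
  generation_time_laplace_general μ X Y hX hY hXpos hYpos g hg
end
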